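/- arXiv:2501.08865 — 3 statements merged into one kernel-verified Lean document; each statement's English description precedes it below -/
import Mathlib

section
/- If U is not constant on Y, then the free energy difference U*(β) := (1/β)·ln Z_β, where Z_β = Σ_{i∈Y} q_i e^{β u_i}, is a strictly increasing function of β on ℝ \ {0} (equivalently, for all β₁ < β₂ with β₁, β₂ ≠ 0, U*(β₁) < U*(β₂)). -/
open Real Finset

/-- If `U` is not constant on `Y`, then the free energy difference
`U*(β) := (1/β)·ln Z_β`, with `Z_β = Σ_i q_i e^{β u_i}`, is strictly increasing on
`ℝ \ {0}`: for all `β₁ < β₂` with `β₁, β₂ ≠ 0`, `U*(β₁) < U*(β₂)`. -/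
theorem free_energy_strictly_increasing
    {Y : Type*} [Fintype Y] [Nonempty Y]
    (q : Y → ℝ) (hq_pos : ∀ i, 0 < q i) (hq_sum : ∑ i, q i = 1)
    (U : Y → ℝ) (hU : ∃ i j, U i ≠ U j) :
    ∀ β₁ β₂ : ℝ, β₁ ≠ 0 → β₂ ≠ 0 → β₁ < β₂ →
      (1 / β₁) * Real.log (∑ i, q i * Real.exp (β₁ * U i))
        < (1 / β₂) * Real.log (∑ i, q i * Real.exp (β₂ * U i)) := by
  set Z : ℝ → ℝ := fun β => ∑ i, q i * Real.exp (β * U i) with hZdef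
  set Z₁ : ℝ → ℝ := fun β => ∑ i, q i * U i * Real.exp (β * U i) with hZ₁def
  set Z₂ : ℝ → ℝ := fun β => ∑ i, q i * U i ^ 2 * Real.exp (β * U i) with hZ₂def
  have hZpos : ∀ β, 0 < Z β := fun β =>
    Finset.sum_pos (fun i _ => mul_pos (hq_pos i) (Real.exp_pos _)) Finset.univ_nonempty
  have hZ : ∀ β, HasDerivAt Z (Z₁ β) β := by
    intro β
    have : HasDerivAt Z (∑ i, q i * (Real.exp (β * U i) * (1 * U i))) β :=
      HasDerivAt.fun_sum fun i _ => (((hasDerivAt_id β).mul_const (U i)).exp).const_mul (q i)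
    convert this using 1
    apply Finset.sum_congr rfl; intro i _; ring
  have hZ₁ : ∀ β, HasDerivAt Z₁ (Z₂ β) β := by
    intro β
    have : HasDerivAt Z₁ (∑ i, q i * U i * (Real.exp (β * U i) * (1 * U i))) β :=
      HasDerivAt.fun_sum fun i _ => (((hasDerivAt_id β).mul_const (U i)).exp).const_mul (q i * U i)
    convert this using 1
    apply Finset.sum_congr rfl; intro i _; ring
  -- strict Cauchy–Schwarz: Z₂ Z - Z₁² > 0
  have key : ∀ β, 0 < Z₂ β * Z β - Z₁ β * Z₁ β := by
    intro β
    set w : Y → ℝ := fun i => q i * Real.exp (β * U i) with hw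
    have hwpos : ∀ i, 0 < w i := fun i => mul_pos (hq_pos i) (Real.exp_pos _)
    have expand : ∀ i : Y, ∑ j, w i * w j * (U i - U j) ^ 2
        = (q i * U i ^ 2 * Real.exp (β * U i)) * Z β
          - (q i * U i * Real.exp (β * U i)) * (2 * Z₁ β)
          + w i * Z₂ β := by
      intro i
      rw [hZdef, hZ₁def, hZ₂def]
      simp only [Finset.mul_sum, ← Finset.sum_sub_distrib, ← Finset.sum_add_distrib]
      apply Finset.sum_congr rfl; intro j _; rw [hw]; ring
    have hsum : ∑ i, ∑ j, w i * w j * (U i - U j) ^ 2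
        = 2 * (Z₂ β * Z β - Z₁ β * Z₁ β) := by
      rw [Finset.sum_congr rfl fun i _ => expand i]
      rw [Finset.sum_add_distrib, Finset.sum_sub_distrib, ← Finset.sum_mul, ← Finset.sum_mul,
        ← Finset.sum_mul]
      show Z₂ β * Z β - Z₁ β * (2 * Z₁ β) + Z β * Z₂ β = _
      ring
    obtain ⟨i₀, j₀, hij⟩ := hU
    have hpos : 0 < ∑ i, ∑ j, w i * w j * (U i - U j) ^ 2 := by
      apply Finset.sum_pos'
      · intro i _
        exact Finset.sum_nonneg fun j _ =>
          mul_nonneg (mul_nonneg (hwpos i).le (hwpos j).le) (sq_nonneg _)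
      · refine ⟨i₀, Finset.mem_univ _, Finset.sum_pos' (fun j _ =>
          mul_nonneg (mul_nonneg (hwpos i₀).le (hwpos j).le) (sq_nonneg _))
          ⟨j₀, Finset.mem_univ _, ?_⟩⟩
        exact mul_pos (mul_pos (hwpos i₀) (hwpos j₀))
          (sq_pos_of_ne_zero (sub_ne_zero.mpr hij))
    linarith [hsum ▸ hpos]
  set g : ℝ → ℝ := fun β => Real.log (Z β) with hgdef
  have hg : ∀ β, HasDerivAt g (Z₁ β / Z β) β := fun β => (hZ β).log (hZpos β).ne'
  have hderivg : deriv g = fun β => Z₁ β / Z β := funext fun β => (hg β).deriv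
  have hconv : StrictConvexOn ℝ Set.univ g := by
    apply strictConvexOn_univ_of_deriv2_pos
    · have hZc : Continuous Z := by
        apply continuous_finset_sum
        intro i _
        exact (continuous_const.mul ((continuous_id.mul continuous_const).rexp))
      exact hZc.log fun β => (hZpos β).ne'
    · intro β
      have hh : HasDerivAt (fun β => Z₁ β / Z β)
          ((Z₂ β * Z β - Z₁ β * Z₁ β) / (Z β) ^ 2) β :=
        (hZ₁ β).div (hZ β) (hZpos β).ne'
      have : deriv^[2] g β = (Z₂ β * Z β - Z₁ β * Z₁ β) / (Z β) ^ 2 := by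
        show deriv (deriv g) β = _
        rw [hderivg]
        exact hh.deriv
      rw [this]
      exact div_pos (key β) (pow_pos (hZpos β) 2)
  have hg0 : g 0 = 0 := by
    simp [hgdef, hZdef, hq_sum]
  intro β₁ β₂ h₁ h₂ h₁₂
  have := hconv.secant_strict_mono (a := 0) (Set.mem_univ _) (Set.mem_univ _)
    (Set.mem_univ _) h₁ h₂ h₁₂
  simp only [hg0, sub_zero] at this
  calc (1 / β₁) * Real.log (Z β₁) = g β₁ / β₁ := by rw [hgdef]; ring
    _ < g β₂ / β₂ := this
    _ = (1 / β₂) * Real.log (Z β₂) := by rw [hgdef]; ring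
end

section
/- Assume U is not constant on Y and attains its maximum at a unique index i*_max. The function r(β) := β·E_{p_β}[U] − ln Z_β (equal to D_KL(p_β‖q) where p_β is the Boltzmann–Gibbs distribution) satisfies: r(0) = 0; r is strictly increasing on (0, ∞), with derivative r′(β) = β·Var_{p_β}(U) > 0 for β > 0; and lim_{β→+∞} r(β) = −ln q_{i*_max}. -/
open Real Finset Filter Topology

/-- Assume `U` is not constant on `Y` and attains its maximum at a unique
index `i*_max`.  The function `r(β) := β·E_{p_β}[U] − ln Z_β` (equal to `D_KL(p_β‖q)` for the
Boltzmann–Gibbs distribution `p_β`) satisfies `r(0) = 0`; `r` is strictly increasing on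
`(0, ∞)` with derivative `r′(β) = β·Var_{p_β}(U) > 0` for `β > 0`; and
`lim_{β→+∞} r(β) = −ln q_{i*_max}`. -/
theorem rate_function_strictly_increasing
    {Y : Type*} [Fintype Y] [Nonempty Y]
    (q : Y → ℝ) (hq_pos : ∀ i, 0 < q i) (hq_sum : ∑ i, q i = 1)
    (U : Y → ℝ) (hU : ∃ i j, U i ≠ U j)
    (imax : Y) (hmax : ∀ j, j ≠ imax → U j < U imax)
    (p : ℝ → Y → ℝ)
    (hp : p = fun β i => q i * Real.exp (β * U i) / (∑ j, q j * Real.exp (β * U j)))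
    (r : ℝ → ℝ)
    (hr : r = fun β => β * (∑ i, p β i * U i)
      - Real.log (∑ i, q i * Real.exp (β * U i))) :
    r 0 = 0 ∧
    (∀ β, r β = ∑ i, p β i * Real.log (p β i / q i)) ∧
    (∀ β : ℝ, 0 < β →
      HasDerivAt r (β * ((∑ i, p β i * (U i) ^ 2) - (∑ i, p β i * U i) ^ 2)) β ∧
      0 < β * ((∑ i, p β i * (U i) ^ 2) - (∑ i, p β i * U i) ^ 2)) ∧
    StrictMonoOn r (Set.Ioi 0) ∧
    Filter.Tendsto r Filter.atTop (𝓝 (-Real.log (q imax))) := by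
  classical
  set Z : ℝ → ℝ := fun β => ∑ i, q i * Real.exp (β * U i) with hZdef
  set W : ℝ → ℝ := fun β => ∑ i, q i * (Real.exp (β * U i) * U i) with hWdef
  set V : ℝ → ℝ := fun β => ∑ i, q i * (Real.exp (β * U i) * U i * U i) with hVdef
  have hZpos : ∀ β, 0 < Z β := fun β =>
    Finset.sum_pos (fun i _ => mul_pos (hq_pos i) (Real.exp_pos _)) Finset.univ_nonempty
  have hppos : ∀ β i, 0 < p β i := by
    intro β i; rw [hp]
    exact div_pos (mul_pos (hq_pos i) (Real.exp_pos _)) (hZpos β)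
  have hpsum : ∀ β, ∑ i, p β i = 1 := by
    intro β; rw [hp]
    simp only
    rw [← Finset.sum_div, div_self (hZpos β).ne']
  have hsumU : ∀ β, ∑ i, p β i * U i = W β / Z β := by
    intro β; rw [hp, hWdef]
    simp only
    rw [Finset.sum_div]
    exact Finset.sum_congr rfl fun i _ => by ring
  have hsumU2 : ∀ β, ∑ i, p β i * U i ^ 2 = V β / Z β := by
    intro β; rw [hp, hVdef]
    simp only
    rw [Finset.sum_div]
    exact Finset.sum_congr rfl fun i _ => by ring
  have hrW : ∀ β, r β = β * (W β / Z β) - Real.log (Z β) := by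
    intro β; rw [hr]; simp only [← hsumU β]; rfl
  -- derivatives
  have hexp' : ∀ (c β : ℝ), HasDerivAt (fun b : ℝ => Real.exp (b * c)) (Real.exp (β * c) * c) β := by
    intro c β
    simpa using ((hasDerivAt_id β).mul_const c).exp
  have hZ' : ∀ β, HasDerivAt Z (W β) β := by
    intro β
    rw [hWdef]
    exact HasDerivAt.fun_sum fun i _ => ((hexp' (U i) β).const_mul (q i))
  have hW' : ∀ β, HasDerivAt W (V β) β := by
    intro β
    rw [hVdef]
    exact HasDerivAt.fun_sum fun i _ => (((hexp' (U i) β).mul_const (U i)).const_mul (q i))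
  have hder : ∀ β : ℝ, HasDerivAt r (β * ((V β / Z β) - (W β / Z β) ^ 2)) β := by
    intro β
    have hE : HasDerivAt (fun b => W b / Z b)
        ((V β * Z β - W β * W β) / (Z β) ^ 2) β := (hW' β).div (hZ' β) (hZpos β).ne'
    have hL : HasDerivAt (fun b => Real.log (Z b)) (W β / Z β) β :=
      (hZ' β).log (hZpos β).ne'
    have hF : HasDerivAt (fun b => b * (W b / Z b) - Real.log (Z b))
        (1 * (W β / Z β) + β * ((V β * Z β - W β * W β) / (Z β) ^ 2) - W β / Z β) β :=
      ((hasDerivAt_id β).mul hE).sub hL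
    have heq : (fun b => b * (W b / Z b) - Real.log (Z b)) = r := by
      funext b; rw [hrW b]
    rw [heq] at hF
    convert hF using 1
    have hz := (hZpos β).ne'
    field_simp
    ring
  have hderp : ∀ β : ℝ, HasDerivAt r
      (β * ((∑ i, p β i * (U i) ^ 2) - (∑ i, p β i * U i) ^ 2)) β := by
    intro β
    rw [hsumU β, hsumU2 β]
    exact hder β
  -- variance positivity
  have hvarpos : ∀ β : ℝ, 0 < (∑ i, p β i * (U i) ^ 2) - (∑ i, p β i * U i) ^ 2 := by
    intro β
    set m : ℝ := ∑ i, p β i * U i with hm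
    have hvar : (∑ i, p β i * (U i) ^ 2) - m ^ 2 = ∑ i, p β i * (U i - m) ^ 2 := by
      have h1 : ∀ i ∈ Finset.univ (α := Y), p β i * (U i - m) ^ 2
          = p β i * U i ^ 2 - 2 * m * (p β i * U i) + m ^ 2 * p β i := fun i _ => by ring
      rw [Finset.sum_congr rfl h1, Finset.sum_add_distrib, Finset.sum_sub_distrib,
        ← Finset.mul_sum, ← Finset.mul_sum, hpsum β, ← hm, mul_one]
      ring
    rw [hvar]
    obtain ⟨i0, j0, hij⟩ := hU
    have hkey : ∃ i, U i ≠ m := by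
      by_contra h
      push_neg at h
      exact hij ((h i0).trans (h j0).symm)
    obtain ⟨i1, hi1⟩ := hkey
    apply Finset.sum_pos' (fun i _ => mul_nonneg (hppos β i).le (sq_nonneg _))
    refine ⟨i1, Finset.mem_univ i1, ?_⟩
    have hne : U i1 - m ≠ 0 := sub_ne_zero.mpr hi1
    have : (0:ℝ) < (U i1 - m) ^ 2 := by positivity
    exact mul_pos (hppos β i1) this
  refine ⟨?_, ?_, ?_, ?_, ?_⟩
  · rw [hr]; simp [hq_sum]
  · -- KL form
    intro β
    have hlog : ∀ i, Real.log (p β i / q i) = β * U i - Real.log (Z β) := by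
      intro i
      have h1 : p β i / q i = Real.exp (β * U i) / Z β := by
        rw [hp]
        have hz := (hZpos β).ne'
        have hqi := (hq_pos i).ne'
        simp only [hZdef] at hz ⊢
        field_simp
      rw [h1, Real.log_div (Real.exp_ne_zero _) (hZpos β).ne', Real.log_exp]
    rw [hrW β]
    calc β * (W β / Z β) - Real.log (Z β)
        = β * (∑ i, p β i * U i) - (∑ i, p β i) * Real.log (Z β) := by
          rw [hsumU β, hpsum β, one_mul]
      _ = ∑ i, p β i * (β * U i - Real.log (Z β)) := by
          rw [Finset.mul_sum, Finset.sum_mul, ← Finset.sum_sub_distrib]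
          exact (Finset.sum_congr rfl fun i _ => by ring).symm
      _ = ∑ i, p β i * Real.log (p β i / q i) := by
          exact Finset.sum_congr rfl fun i _ => by rw [hlog i]
  · intro β hβ
    exact ⟨hderp β, mul_pos hβ (hvarpos β)⟩
  · apply strictMonoOn_of_deriv_pos (convex_Ioi 0)
    · exact fun x _ => (hderp x).continuousAt.continuousWithinAt
    · intro x hx
      rw [interior_Ioi] at hx
      rw [(hderp x).deriv]
      exact mul_pos hx (hvarpos x)
  · -- limit
    set M : ℝ := U imax with hM
    set S : ℝ → ℝ := fun β => ∑ i, q i * Real.exp (β * (U i - M)) with hSdef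
    set T : ℝ → ℝ := fun β => ∑ i, q i * (Real.exp (β * (U i - M)) * (U i - M)) with hTdef
    have hSpos : ∀ β, 0 < S β := fun β =>
      Finset.sum_pos (fun i _ => mul_pos (hq_pos i) (Real.exp_pos _)) Finset.univ_nonempty
    have hrT : ∀ β, r β = β * (T β / S β) - Real.log (S β) := by
      intro β
      have hZS : Z β = Real.exp (β * M) * S β := by
        rw [hZdef, hSdef]
        simp only
        rw [Finset.mul_sum]
        refine Finset.sum_congr rfl fun i _ => ?_
        rw [← mul_assoc, mul_comm (Real.exp (β * M)) (q i), mul_assoc, ← Real.exp_add]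
        ring_nf
      have hWS : W β = Real.exp (β * M) * (T β + M * S β) := by
        rw [hWdef, hSdef, hTdef]
        simp only
        rw [Finset.mul_sum, mul_add, Finset.mul_sum, Finset.mul_sum, ← Finset.sum_add_distrib]
        refine Finset.sum_congr rfl fun i _ => ?_
        have he : Real.exp (β * U i) = Real.exp (β * M) * Real.exp (β * (U i - M)) := by
          rw [← Real.exp_add]; ring_nf
        rw [he]; ring
      rw [hrW β, hZS, hWS, Real.log_mul (Real.exp_ne_zero _) (hSpos β).ne', Real.log_exp]
      have hs := (hSpos β).ne'
      field_simp
      ring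
    have hSlim : Tendsto S atTop (𝓝 (q imax)) := by
      have : Tendsto (fun β => ∑ i, q i * Real.exp (β * (U i - M))) atTop
          (𝓝 (∑ i, if i = imax then q i else 0)) := by
        apply tendsto_finset_sum
        intro i _
        by_cases hi : i = imax
        · subst hi
          simp only [if_pos rfl, hM, sub_self, mul_zero, Real.exp_zero, mul_one]
          exact tendsto_const_nhds
        · simp only [if_neg hi]
          have hc : U i - M < 0 := sub_neg.mpr (hmax i hi)
          have h1 : Tendsto (fun β : ℝ => β * (U i - M)) atTop atBot :=
            tendsto_id.atTop_mul_const_of_neg hc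
          have h2 : Tendsto (fun β : ℝ => Real.exp (β * (U i - M))) atTop (𝓝 0) :=
            Real.tendsto_exp_atBot.comp h1
          simpa using h2.const_mul (q i)
      simpa [Finset.sum_ite_eq' Finset.univ imax] using this
    have hloglim : Tendsto (fun β => Real.log (S β)) atTop (𝓝 (Real.log (q imax))) :=
      ((Real.continuousAt_log (hq_pos imax).ne').tendsto).comp hSlim
    have hTlim : Tendsto (fun β => β * T β) atTop (𝓝 0) := by
      have : Tendsto (fun β => ∑ i, β * (q i * (Real.exp (β * (U i - M)) * (U i - M)))) atTop
          (𝓝 (∑ _i : Y, (0:ℝ))) := by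
        apply tendsto_finset_sum
        intro i _
        by_cases hi : i = imax
        · subst hi
          have hz0 : U i - M = 0 := by rw [hM]; ring
          have heq0 : (fun β : ℝ => β * (q i * (Real.exp (β * (U i - M)) * (U i - M))))
              = fun _ => (0:ℝ) := by
            funext β; rw [hz0]; simp
          rw [heq0]
          exact tendsto_const_nhds
        · have hc : U i - M < 0 := sub_neg.mpr (hmax i hi)
          have h2 : Tendsto (fun β : ℝ => β * Real.exp (β * (U i - M))) atTop (𝓝 0) := by
            have h3 : Tendsto (fun x : ℝ => (-(U i - M))⁻¹ * (x * Real.exp (-x)))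
                atTop (𝓝 ((-(U i - M))⁻¹ * 0)) := by
              apply Tendsto.const_mul
              have := tendsto_pow_mul_exp_neg_atTop_nhds_zero 1
              simpa using this
            have h4 : Tendsto (fun β : ℝ => β * -(U i - M)) atTop atTop :=
              tendsto_id.atTop_mul_const (by linarith)
            have h5 := h3.comp h4
            rw [mul_zero] at h5
            have hne : -(U i - M) ≠ 0 := by linarith
            have hfun : (fun β : ℝ => β * Real.exp (β * (U i - M)))
                = (fun x : ℝ => (-(U i - M))⁻¹ * (x * Real.exp (-x)))
                  ∘ (fun β => β * -(U i - M)) := by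
              funext β
              simp only [Function.comp_apply]
              rw [show -(β * -(U i - M)) = β * (U i - M) by ring]
              rw [show (-(U i - M))⁻¹ * (β * -(U i - M) * Real.exp (β * (U i - M)))
                  = ((-(U i - M))⁻¹ * -(U i - M)) * (β * Real.exp (β * (U i - M))) by ring,
                inv_mul_cancel₀ hne, one_mul]
            rw [hfun]
            exact h5
          have : Tendsto (fun β : ℝ => (q i * (U i - M)) * (β * Real.exp (β * (U i - M))))
              atTop (𝓝 ((q i * (U i - M)) * 0)) := h2.const_mul _
          rw [mul_zero] at this
          convert this using 2 with β
          ring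
      have heq : (fun β => β * T β)
          = fun β => ∑ i, β * (q i * (Real.exp (β * (U i - M)) * (U i - M))) := by
        funext β; rw [hTdef]; simp only [Finset.mul_sum]
      rw [heq]
      simpa using this
    have hfinal : Tendsto (fun β => β * (T β / S β) - Real.log (S β)) atTop
        (𝓝 (0 / q imax - Real.log (q imax))) := by
      apply Tendsto.sub _ hloglim
      have : Tendsto (fun β => (β * T β) / S β) atTop (𝓝 (0 / q imax)) :=
        hTlim.div hSlim (hq_pos imax).ne'
      convert this using 2 with β
      ring
    rw [zero_div, zero_sub] at hfinal
    have heq : r = fun β => β * (T β / S β) - Real.log (S β) := funext hrT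
    rw [heq]
    exact hfinal
end

section
/- Define the rate-utility function Ū(R) := max{ E_π[U] : π ∈ Δ(X×Y), π_X = P, I(π) ≤ R } for R ∈ [0, R_max], where R_max is any bound with Ū constant at its maximal value beyond it, and let R_min be the smallest R at which Ū attains its maximal value Ū(R_max). Then Ū is non-decreasing and concave on [0, R_max], strictly increasing on [0, R_min], and constant on [R_min, R_max]. -/
open Finset


/-- Two-point log-sum inequality (with Lean's junk-value conventions). -/
lemma logsum2 (a1 a2 b1 b2 : ℝ) (ha1 : 0 ≤ a1) (ha2 : 0 ≤ a2)
    (hb1 : 0 ≤ b1) (hb2 : 0 ≤ b2)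
    (h1 : a1 ≠ 0 → 0 < b1) (h2 : a2 ≠ 0 → 0 < b2) :
    (a1 + a2) * Real.log ((a1 + a2) / (b1 + b2)) ≤
      a1 * Real.log (a1 / b1) + a2 * Real.log (a2 / b2) := by
  have main : ∀ a b c d : ℝ, 0 ≤ a → 0 ≤ b → 0 ≤ c → 0 ≤ d →
      (a ≠ 0 → 0 < c) → (b ≠ 0 → 0 < d) → b ≠ 0 → a = 0 →
      (a + b) * Real.log ((a + b) / (c + d)) ≤
        a * Real.log (a / c) + b * Real.log (b / d) := by
    intro a b c d ha hb hc hd h1 h2 hb0 ha0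
    subst ha0
    have hbp : 0 < b := lt_of_le_of_ne hb (Ne.symm hb0)
    have hdp := h2 hb0
    have hle : b / (c + d) ≤ b / d := div_le_div_of_nonneg_left hb hdp (by linarith)
    have hpos : 0 < b / (c + d) := div_pos hbp (by linarith)
    have := Real.log_le_log hpos hle
    simpa using mul_le_mul_of_nonneg_left this hb
  rcases eq_or_ne a1 0 with h | ha1p
  · rcases eq_or_ne a2 0 with h' | ha2p
    · simp [h, h']
    · exact main a1 a2 b1 b2 ha1 ha2 hb1 hb2 h1 h2 ha2p h
  · rcases eq_or_ne a2 0 with h' | ha2p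
    · have := main a2 a1 b2 b1 ha2 ha1 hb2 hb1 h2 h1 ha1p h'
      have e1 : a2 + a1 = a1 + a2 := by ring
      have e2 : b2 + b1 = b1 + b2 := by ring
      rw [e1, e2] at this; linarith
    · -- both positive
      have ha1' : 0 < a1 := lt_of_le_of_ne ha1 (Ne.symm ha1p)
      have ha2' : 0 < a2 := lt_of_le_of_ne ha2 (Ne.symm ha2p)
      have hb1' := h1 ha1p
      have hb2' := h2 ha2p
      have hSa : 0 < a1 + a2 := by linarith
      have hSb : 0 < b1 + b2 := by linarith
      have key : ∀ a b : ℝ, 0 < a → 0 < b →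
          a - b * (a1 + a2) / (b1 + b2) ≤
            a * Real.log (a / b) - a * Real.log ((a1 + a2) / (b1 + b2)) := by
        intro a b ha hb
        have hx : 0 < b * (a1 + a2) / (a * (b1 + b2)) := by positivity
        have hlog := Real.log_le_sub_one_of_pos hx
        have hrw : Real.log (b * (a1 + a2) / (a * (b1 + b2))) =
            Real.log ((a1 + a2) / (b1 + b2)) - Real.log (a / b) := by
          rw [Real.log_div (by positivity) (by positivity),
              Real.log_mul hb.ne' hSa.ne', Real.log_mul ha.ne' hSb.ne',
              Real.log_div ha.ne' hb.ne', Real.log_div hSa.ne' hSb.ne']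
          ring
        rw [hrw] at hlog
        have hval : a * (b * (a1 + a2) / (a * (b1 + b2))) = b * (a1 + a2) / (b1 + b2) := by
          field_simp
        nlinarith [mul_le_mul_of_nonneg_left hlog ha.le]
      have k1 := key a1 b1 ha1' hb1'
      have k2 := key a2 b2 ha2' hb2'
      have hsum : b1 * (a1 + a2) / (b1 + b2) + b2 * (a1 + a2) / (b1 + b2) = a1 + a2 := by
        field_simp
      linarith



/-- Convexity of mutual information in the joint, for fixed X-marginal. -/
lemma I_convex_comb {X Y : Type*} [Fintype X] [Fintype Y]
    (π1 π2 : X → Y → ℝ) (h1n : ∀ x y, 0 ≤ π1 x y) (h2n : ∀ x y, 0 ≤ π2 x y)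
    (hrow : ∀ x, ∑ y, π1 x y = ∑ y, π2 x y)
    (t : ℝ) (ht0 : 0 < t) (ht1 : t < 1) :
    (∑ x, ∑ y, (t * π1 x y + (1 - t) * π2 x y) *
        Real.log ((t * π1 x y + (1 - t) * π2 x y) /
          ((∑ y', (t * π1 x y' + (1 - t) * π2 x y')) *
           (∑ x', (t * π1 x' y + (1 - t) * π2 x' y))))) ≤
      t * (∑ x, ∑ y, π1 x y * Real.log (π1 x y / ((∑ y', π1 x y') * (∑ x', π1 x' y))))
      + (1 - t) * (∑ x, ∑ y, π2 x y * Real.log (π2 x y / ((∑ y', π2 x y') * (∑ x', π2 x' y)))) := by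
  have ht1' : 0 < 1 - t := by linarith
  rw [Finset.mul_sum, Finset.mul_sum, ← Finset.sum_add_distrib]
  refine Finset.sum_le_sum fun x _ => ?_
  rw [Finset.mul_sum, Finset.mul_sum, ← Finset.sum_add_distrib]
  refine Finset.sum_le_sum fun y _ => ?_
  set r : ℝ := ∑ y', π1 x y' with hr
  have hrowc : ∑ y', (t * π1 x y' + (1 - t) * π2 x y') = r := by
    rw [Finset.sum_add_distrib, ← Finset.mul_sum, ← Finset.mul_sum, ← hrow x]
    ring
  set c1 : ℝ := ∑ x', π1 x' y with hc1
  set c2 : ℝ := ∑ x', π2 x' y with hc2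
  have hcolc : ∑ x', (t * π1 x' y + (1 - t) * π2 x' y) = t * c1 + (1 - t) * c2 := by
    rw [Finset.sum_add_distrib, ← Finset.mul_sum, ← Finset.mul_sum]
  rw [hrowc, hcolc]
  have hrnn : 0 ≤ r := Finset.sum_nonneg fun y' _ => h1n x y'
  have hc1nn : 0 ≤ c1 := Finset.sum_nonneg fun x' _ => h1n x' y
  have hc2nn : 0 ≤ c2 := Finset.sum_nonneg fun x' _ => h2n x' y
  have key := logsum2 (t * π1 x y) ((1 - t) * π2 x y) (t * (r * c1)) ((1 - t) * (r * c2))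
    (mul_nonneg ht0.le (h1n x y)) (mul_nonneg ht1'.le (h2n x y))
    (mul_nonneg ht0.le (mul_nonneg hrnn hc1nn)) (mul_nonneg ht1'.le (mul_nonneg hrnn hc2nn))
    (fun h => by
      have hp : 0 < π1 x y := lt_of_le_of_ne (h1n x y) (by
        intro h'; exact h (by rw [← h']; ring))
      have hr' : π1 x y ≤ r := Finset.single_le_sum (fun y' _ => h1n x y') (Finset.mem_univ y)
      have hc' : π1 x y ≤ c1 := Finset.single_le_sum (fun x' _ => h1n x' y) (Finset.mem_univ x)
      exact mul_pos ht0 (mul_pos (lt_of_lt_of_le hp hr') (lt_of_lt_of_le hp hc')))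
    (fun h => by
      have hp : 0 < π2 x y := lt_of_le_of_ne (h2n x y) (by
        intro h'; exact h (by rw [← h']; ring))
      have hr2 : π2 x y ≤ ∑ y', π2 x y' :=
        Finset.single_le_sum (fun y' _ => h2n x y') (Finset.mem_univ y)
      have hrr : 0 < r := by rw [hr, hrow x]; linarith
      have hc' : π2 x y ≤ c2 := Finset.single_le_sum (fun x' _ => h2n x' y) (Finset.mem_univ x)
      exact mul_pos ht1' (mul_pos hrr (lt_of_lt_of_le hp hc')))
  have e1 : t * (r * c1) + (1 - t) * (r * c2) = r * (t * c1 + (1 - t) * c2) := by ring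
  rw [e1] at key
  have e2 : (t * π1 x y) / (t * (r * c1)) = π1 x y / (r * c1) :=
    mul_div_mul_left _ _ ht0.ne'
  have e3 : ((1 - t) * π2 x y) / ((1 - t) * (r * c2)) = π2 x y / (r * c2) :=
    mul_div_mul_left _ _ ht1'.ne'
  rw [e2, e3] at key
  have e4 : (∑ y', π2 x y') = r := (hrow x).symm
  rw [e4]
  calc (t * π1 x y + (1 - t) * π2 x y) *
      Real.log ((t * π1 x y + (1 - t) * π2 x y) / (r * (t * c1 + (1 - t) * c2)))
      ≤ t * π1 x y * Real.log (π1 x y / (r * c1))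
        + (1 - t) * π2 x y * Real.log (π2 x y / (r * c2)) := key
    _ = t * (π1 x y * Real.log (π1 x y / (r * c1)))
        + (1 - t) * (π2 x y * Real.log (π2 x y / (r * c2))) := by ring


lemma csSup_combo (S1 S2 S : Set ℝ) (h1 : S1.Nonempty) (h2 : S2.Nonempty)
    (hbdd : BddAbove S) (a b : ℝ) (ha : 0 < a) (hb : 0 < b)
    (h : ∀ v1 ∈ S1, ∀ v2 ∈ S2, a * v1 + b * v2 ∈ S) :
    a * sSup S1 + b * sSup S2 ≤ sSup S := by
  have key : sSup S1 ≤ (sSup S - b * sSup S2) / a := by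
    refine csSup_le h1 fun v1 hv1 => ?_
    rw [le_div_iff₀ ha]
    have key2 : sSup S2 ≤ (sSup S - v1 * a) / b := by
      refine csSup_le h2 fun v2 hv2 => ?_
      rw [le_div_iff₀ hb]
      have := le_csSup hbdd (h v1 hv1 v2 hv2)
      linarith
    have := mul_le_mul_of_nonneg_left key2 hb.le
    rw [mul_div_cancel₀ _ hb.ne'] at this
    linarith
  have := mul_le_mul_of_nonneg_left key ha.le
  rw [mul_div_cancel₀ _ ha.ne'] at this
  linarith


/-- Define the rate-utility function
`Ū(R) := max { E_π[U] : π ∈ Δ(X×Y), π_X = P, I(π) ≤ R }` on `[0, R_max]`, where `R_max` is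
any bound beyond which `Ū` is constant at its maximal value, and `R_min` is the smallest
`R ≥ 0` at which `Ū` attains its maximal value `Ū(R_max)`.  Then `Ū` is non-decreasing and
concave on `[0, R_max]`, strictly increasing on `[0, R_min]`, and constant on
`[R_min, R_max]`. -/
theorem rate_utility_function_concave_nondecreasing
    {X Y : Type*} [Fintype X] [Fintype Y] [Nonempty X] [Nonempty Y]
    (P : X → ℝ) (hP_nonneg : ∀ x, 0 ≤ P x) (hP_sum : ∑ x, P x = 1)
    (U : X → Y → ℝ)
    (I : (X → Y → ℝ) → ℝ)
    (hI : I = fun π => ∑ x, ∑ y,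
      π x y * Real.log (π x y / ((∑ y', π x y') * (∑ x', π x' y))))
    (Ubar : ℝ → ℝ)
    (hUbar : Ubar = fun R => sSup ((fun π : X → Y → ℝ => ∑ x, ∑ y, π x y * U x y) ''
      {π : X → Y → ℝ | (∀ x y, 0 ≤ π x y) ∧ (∀ x, ∑ y, π x y = P x) ∧ I π ≤ R}))
    (Rmin Rmax : ℝ) (hRmin_nonneg : 0 ≤ Rmin) (hRminmax : Rmin ≤ Rmax)
    (hconst_beyond : ∀ R, Rmax ≤ R → Ubar R = Ubar Rmax)
    (hattain : Ubar Rmin = Ubar Rmax)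
    (hsmallest : ∀ R, 0 ≤ R → Ubar R = Ubar Rmax → Rmin ≤ R) :
    MonotoneOn Ubar (Set.Icc 0 Rmax) ∧
    ConcaveOn ℝ (Set.Icc 0 Rmax) Ubar ∧
    StrictMonoOn Ubar (Set.Icc 0 Rmin) ∧
    (∀ R ∈ Set.Icc Rmin Rmax, Ubar R = Ubar Rmax) := by
  classical
  set E : (X → Y → ℝ) → ℝ := fun π => ∑ x, ∑ y, π x y * U x y with hE
  set F : ℝ → Set (X → Y → ℝ) := fun R =>
    {π : X → Y → ℝ | (∀ x y, 0 ≤ π x y) ∧ (∀ x, ∑ y, π x y = P x) ∧ I π ≤ R} with hF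
  have hUbar' : ∀ R, Ubar R = sSup (E '' F R) := fun R => by rw [hUbar]
  -- the feasible set is nonempty for R ≥ 0
  obtain ⟨y0⟩ := ‹Nonempty Y›
  have hfeas : ∀ R : ℝ, 0 ≤ R → (E '' F R).Nonempty := by
    intro R hR
    set π0 : X → Y → ℝ := fun x y => if y = y0 then P x else 0 with hπ0
    refine ⟨E π0, π0, ⟨fun x y => ?_, fun x => ?_, ?_⟩, rfl⟩
    · by_cases h : y = y0 <;> simp [hπ0, h, hP_nonneg x]
    · simp [hπ0]
    · have : I π0 = 0 := by
        rw [hI]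
        refine Finset.sum_eq_zero fun x _ => Finset.sum_eq_zero fun y _ => ?_
        by_cases h : y = y0
        · subst h
          have hrow : ∑ y', π0 x y' = P x := by simp [hπ0]
          have hcol : ∑ x', π0 x' y = 1 := by simpa [hπ0] using hP_sum
          rw [hrow, hcol]
          rcases eq_or_lt_of_le (hP_nonneg x) with h0 | h0
          · simp [hπ0, ← h0]
          · have : π0 x y = P x := by simp [hπ0]
            rw [this, mul_one, div_self h0.ne', Real.log_one, mul_zero]
        · simp [hπ0, h]
      rw [this]; exact hR
  -- boundedness
  have hπle1 : ∀ R, ∀ π ∈ F R, ∀ x y, π x y ≤ 1 := by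
    intro R π hπ x y
    obtain ⟨hnn, hrow, _⟩ := hπ
    have h1 : π x y ≤ ∑ y', π x y' :=
      Finset.single_le_sum (fun y' _ => hnn x y') (Finset.mem_univ y)
    have h2 : P x ≤ ∑ x', P x' :=
      Finset.single_le_sum (fun x' _ => hP_nonneg x') (Finset.mem_univ x)
    rw [hrow x] at h1
    rw [hP_sum] at h2
    linarith
  have hbdd : ∀ R : ℝ, BddAbove (E '' F R) := by
    intro R
    refine ⟨∑ x, ∑ y, |U x y|, fun v hv => ?_⟩
    obtain ⟨π, hπ, rfl⟩ := hv
    refine Finset.sum_le_sum fun x _ => Finset.sum_le_sum fun y _ => ?_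
    calc π x y * U x y ≤ π x y * |U x y| :=
          mul_le_mul_of_nonneg_left (le_abs_self _) (hπ.1 x y)
      _ ≤ 1 * |U x y| := mul_le_mul_of_nonneg_right (hπle1 R π hπ x y) (abs_nonneg _)
      _ = |U x y| := one_mul _
  -- monotonicity
  have hmono : MonotoneOn Ubar (Set.Icc 0 Rmax) := by
    intro R1 hR1 R2 hR2 h12
    rw [hUbar' R1, hUbar' R2]
    refine csSup_le_csSup (hbdd R2) (hfeas R1 hR1.1) (Set.image_mono ?_)
    intro π hπ
    exact ⟨hπ.1, hπ.2.1, le_trans hπ.2.2 h12⟩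
  -- concavity
  have hconc : ConcaveOn ℝ (Set.Icc 0 Rmax) Ubar := by
    refine ⟨convex_Icc _ _, ?_⟩
    intro R1 hR1 R2 hR2 a b ha hb hab
    rcases eq_or_lt_of_le ha with rfl | ha'
    · simp only [zero_smul, zero_add]
      have : b = 1 := by linarith
      subst this; simp
    rcases eq_or_lt_of_le hb with rfl | hb'
    · simp only [zero_smul, add_zero]
      have : a = 1 := by linarith
      subst this; simp
    simp only [smul_eq_mul]
    rw [hUbar' R1, hUbar' R2, hUbar' (a * R1 + b * R2)]
    refine csSup_combo _ _ _ (hfeas R1 hR1.1) (hfeas R2 hR2.1)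
      (hbdd _) a b ha' hb' ?_
    rintro v1 ⟨π1, hπ1, rfl⟩ v2 ⟨π2, hπ2, rfl⟩
    refine ⟨fun x y => a * π1 x y + b * π2 x y, ⟨?_, ?_, ?_⟩, ?_⟩
    · intro x y
      exact add_nonneg (mul_nonneg ha (hπ1.1 x y)) (mul_nonneg hb (hπ2.1 x y))
    · intro x
      rw [Finset.sum_add_distrib, ← Finset.mul_sum, ← Finset.mul_sum,
        hπ1.2.1 x, hπ2.2.1 x]
      nlinarith [hP_nonneg x]
    · have hb_eq : b = 1 - a := by linarith
      subst hb_eq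
      have hkey := I_convex_comb π1 π2 hπ1.1 hπ2.1
        (fun x => by rw [hπ1.2.1 x, hπ2.2.1 x]) a ha' (by linarith)
      rw [hI]
      refine le_trans hkey ?_
      have h1 := hπ1.2.2
      have h2 := hπ2.2.2
      rw [hI] at h1 h2
      nlinarith
    · rw [hE]
      simp only
      rw [Finset.mul_sum, Finset.mul_sum, ← Finset.sum_add_distrib]
      refine Finset.sum_congr rfl fun x _ => ?_
      rw [Finset.mul_sum, Finset.mul_sum, ← Finset.sum_add_distrib]
      exact Finset.sum_congr rfl fun y _ => by ring
  -- constant on [Rmin, Rmax]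
  have hconst : ∀ R ∈ Set.Icc Rmin Rmax, Ubar R = Ubar Rmax := by
    intro R hR
    have h1 := hmono (Set.mem_Icc.mpr ⟨hRmin_nonneg, hRminmax⟩)
      (Set.mem_Icc.mpr ⟨le_trans hRmin_nonneg hR.1, hR.2⟩) hR.1
    have h2 := hmono (Set.mem_Icc.mpr ⟨le_trans hRmin_nonneg hR.1, hR.2⟩)
      (Set.mem_Icc.mpr ⟨le_trans hRmin_nonneg hRminmax, le_refl _⟩) hR.2
    linarith [hattain.le, hattain.ge]
  -- strict monotonicity on [0, Rmin]
  have hstrict : StrictMonoOn Ubar (Set.Icc 0 Rmin) := by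
    intro R1 hR1 R2 hR2 h12
    have hR1' : R1 ∈ Set.Icc (0:ℝ) Rmax := ⟨hR1.1, le_trans hR1.2 hRminmax⟩
    have hR2' : R2 ∈ Set.Icc (0:ℝ) Rmax := ⟨hR2.1, le_trans hR2.2 hRminmax⟩
    rcases lt_or_eq_of_le (hmono hR1' hR2' h12.le) with h | heq
    · exact h
    exfalso
    -- show Ubar R2 = Ubar Rmax
    have hmax : Ubar R2 = Ubar Rmax := by
      rcases eq_or_lt_of_le hR2'.2 with h | h
      · rw [h]
      · set lam : ℝ := (Rmax - R2) / (Rmax - R1) with hlam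
        have hd : 0 < Rmax - R1 := by linarith
        have hlam0 : 0 < lam := div_pos (by linarith) hd
        have hlam1 : lam < 1 := (div_lt_one hd).mpr (by linarith)
        have hcomb : lam * R1 + (1 - lam) * Rmax = R2 := by
          field_simp [hlam]
          have h' : lam * (Rmax - R1) = Rmax - R2 := by
            rw [hlam]; exact div_mul_cancel₀ _ hd.ne'
          linear_combination -h'
        have := hconc.2 hR1' (Set.mem_Icc.mpr ⟨le_trans hRmin_nonneg hRminmax, le_refl _⟩)
          hlam0.le (by linarith : (0:ℝ) ≤ 1 - lam) (by ring)
        simp only [smul_eq_mul] at this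
        rw [hcomb] at this
        have hmono2 := hmono hR2' (Set.mem_Icc.mpr ⟨le_trans hRmin_nonneg hRminmax, le_refl _⟩) hR2'.2
        nlinarith
    have := hsmallest R1 hR1.1 (by rw [heq, hmax])
    linarith [h12, hR2.2]
  exact ⟨hmono, hconc, hstrict, hconst⟩
end
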